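/- Under the hypotheses of the localization proposition (Q closed quadratic form bounded below by λ₀, operators J, J' with J²+(J')²=id, IMS-type defect bounded by γ, and Q(J'ω) ≥ α‖J'ω‖²), if α > λ + γ then ‖J' E(λ)ω‖² ≤ ((λ + γ - λ₀)/(α - λ₀)) ‖E(λ)ω‖² for all ω ∈ H. -/

import Mathlib

open ContinuousLinearMap

/-!
Put `ψ = E(λ)ω`. The partition of unity `J² + J'² = 1` splits `‖ψ‖²` as `‖Jψ‖² + ‖J'ψ‖²`.
Bounding `Q(Jψ)` below by `λ₀‖Jψ‖²` and `Q(J'ψ)` by `α‖J'ψ‖²`, the IMS estimate and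
`Q ψ ≤ λ‖ψ‖²` give `λ₀‖Jψ‖² + α‖J'ψ‖² ≤ (λ + γ)‖ψ‖²`; substituting `‖Jψ‖² = ‖ψ‖² - ‖J'ψ‖²`
and dividing by `α - λ₀ > 0` is the claim.
-/

theorem norm_sq_add_norm_sq_of_isSelfAdjoint_of_comp_add_comp_eq_one
    {𝕜 H : Type*} [RCLike 𝕜] [NormedAddCommGroup H] [InnerProductSpace 𝕜 H] [CompleteSpace H]
    {J J' : H →L[𝕜] H} (hJ : IsSelfAdjoint J) (hJ' : IsSelfAdjoint J')
    (hsum : J ∘L J + J' ∘L J' = 1) (x : H) :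
    ‖J x‖ ^ 2 + ‖J' x‖ ^ 2 = ‖x‖ ^ 2 := by
  rw [apply_norm_sq_eq_inner_adjoint_left, apply_norm_sq_eq_inner_adjoint_left, hJ.adjoint_eq,
    hJ'.adjoint_eq, ← map_add, ← inner_add_left, ← add_apply, hsum, one_apply_eq_self,
    inner_self_eq_norm_sq]

theorem sub_mul_norm_sq_localized_le {H : Type*} [NormedAddCommGroup H]
    (Q : H → ℝ) (D : Set H) (lam0 gam alpha lam : ℝ)
    (hQlb : ∀ ω ∈ D, lam0 * ‖ω‖ ^ 2 ≤ Q ω) (J J' : H → H)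
    (hJD : ∀ ω ∈ D, J ω ∈ D)
    (hIMS : ∀ ω ∈ D, Q (J ω) + Q (J' ω) - Q ω ≤ gam * ‖ω‖ ^ 2)
    (hJ'lb : ∀ ω ∈ D, alpha * ‖J' ω‖ ^ 2 ≤ Q (J' ω))
    {ψ : H} (hψD : ψ ∈ D) (hψQ : Q ψ ≤ lam * ‖ψ‖ ^ 2)
    (hnorm : ‖J ψ‖ ^ 2 + ‖J' ψ‖ ^ 2 = ‖ψ‖ ^ 2) :
    (alpha - lam0) * ‖J' ψ‖ ^ 2 ≤ (lam + gam - lam0) * ‖ψ‖ ^ 2 := by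
  have hJψ := hQlb _ (hJD ψ hψD)
  have hJ'ψ := hJ'lb ψ hψD
  have hIMSψ := hIMS ψ hψD
  rw [show ‖J ψ‖ ^ 2 = ‖ψ‖ ^ 2 - ‖J' ψ‖ ^ 2 by linarith] at hJψ
  linarith

theorem stmt1_general {H : Type*} [NormedAddCommGroup H] [InnerProductSpace ℝ H] [CompleteSpace H]
    (Q : H → ℝ) (D : Set H) (lam0 gam alpha lam : ℝ)
    -- Q is bounded below by λ₀ ≤ 0
    (hlam0 : lam0 ≤ 0)
    (hQlb : ∀ ω ∈ D, lam0 * ‖ω‖ ^ 2 ≤ Q ω)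
    -- J, J' bounded self-adjoint, 0 ≤ J ≤ id, J² + (J')² = id
    (J J' : H →L[ℝ] H)
    (hJsa : IsSelfAdjoint J) (hJ'sa : IsSelfAdjoint J')
    (hsum : J ∘L J + J' ∘L J' = 1)
    -- both preserve the form domain
    (hJD : ∀ ω ∈ D, J ω ∈ D)
    -- IMS-type defect bound
    (hIMS : ∀ ω ∈ D, Q (J ω) + Q (J' ω) - Q ω ≤ gam * ‖ω‖ ^ 2)
    -- ellipticity away from the critical set
    (halpha : 0 < alpha)
    (hJ'lb : ∀ ω ∈ D, alpha * ‖J' ω‖ ^ 2 ≤ Q (J' ω))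
    -- E λ is the spectral projection of the associated operator onto (−∞, λ]:
    -- it maps into the form domain and satisfies the basic spectral estimate
    (E : ℝ → H →L[ℝ] H)
    (hED : ∀ μ : ℝ, ∀ ω : H, E μ ω ∈ D)
    (hEQ : ∀ μ : ℝ, ∀ ω : H, Q (E μ ω) ≤ μ * ‖E μ ω‖ ^ 2) :
    ∀ ω : H, ‖J' (E lam ω)‖ ^ 2 ≤ ((lam + gam - lam0) / (alpha - lam0)) * ‖E lam ω‖ ^ 2 := by
  intro ω
  have hnorm :=
    norm_sq_add_norm_sq_of_isSelfAdjoint_of_comp_add_comp_eq_one hJsa hJ'sa hsum (E lam ω)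
  have key := sub_mul_norm_sq_localized_le Q D lam0 gam alpha lam hQlb J J' hJD hIMS hJ'lb
    (hED lam ω) (hEQ lam ω) hnorm
  have hd : 0 < alpha - lam0 := by linarith
  rw [div_mul_eq_mul_div, le_div_iff₀ hd]
  linarith

/-- Localization estimate for spectral projections of the operator associated to a
closed bounded-below quadratic form `Q`: if `α > λ + γ`, then
`‖J' E(λ)ω‖² ≤ ((λ + γ − λ₀)/(α − λ₀)) ‖E(λ)ω‖²` for all ω. -/
theorem stmt1 {H : Type*} [NormedAddCommGroup H] [InnerProductSpace ℝ H] [CompleteSpace H]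
    (Q : H → ℝ) (D : Set H) (lam0 gam alpha lam : ℝ)
    -- Q is bounded below by λ₀ ≤ 0
    (hlam0 : lam0 ≤ 0)
    (hQlb : ∀ ω ∈ D, lam0 * ‖ω‖ ^ 2 ≤ Q ω)
    -- J, J' bounded self-adjoint, 0 ≤ J ≤ id, J² + (J')² = id
    (J J' : H →L[ℝ] H)
    (hJsa : IsSelfAdjoint J) (hJ'sa : IsSelfAdjoint J')
    (hJpos : ∀ ω : H, (0:ℝ) ≤ inner ℝ (J ω) ω)
    (hJle : ∀ ω : H, (inner ℝ (J ω) ω : ℝ) ≤ ‖ω‖ ^ 2)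
    (hsum : J ∘L J + J' ∘L J' = 1)
    -- both preserve the form domain
    (hJD : ∀ ω ∈ D, J ω ∈ D) (hJ'D : ∀ ω ∈ D, J' ω ∈ D)
    -- IMS-type defect bound
    (hgam : 0 ≤ gam)
    (hIMS : ∀ ω ∈ D, Q (J ω) + Q (J' ω) - Q ω ≤ gam * ‖ω‖ ^ 2)
    -- ellipticity away from the critical set
    (halpha : 0 < alpha)
    (hJ'lb : ∀ ω ∈ D, alpha * ‖J' ω‖ ^ 2 ≤ Q (J' ω))
    -- E λ is the spectral projection of the associated operator onto (−∞, λ]: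
    -- it maps into the form domain and satisfies the basic spectral estimate
    (E : ℝ → H →L[ℝ] H)
    (hED : ∀ μ : ℝ, ∀ ω : H, E μ ω ∈ D)
    (hEQ : ∀ μ : ℝ, ∀ ω : H, Q (E μ ω) ≤ μ * ‖E μ ω‖ ^ 2)
    (hcond : alpha > lam + gam) :
    ∀ ω : H, ‖J' (E lam ω)‖ ^ 2 ≤ ((lam + gam - lam0) / (alpha - lam0)) * ‖E lam ω‖ ^ 2 :=
  stmt1_general Q D lam0 gam alpha lam hlam0 hQlb J J' hJsa hJ'sa hsum hJD hIMS halpha hJ'lb E hED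
    hEQ
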